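/- Let 0 < a < b, β ∈ ℝ, and let j be a nonnegative integer. There is a constant C > 0, depending only on a, b, β, j, such that for every smooth U : ℝ → ℝ supported in [a,b] with |U^{(i)}(y)| ≤ 1 for all 0 ≤ i ≤ j and all y, the following hold for all τ ∈ ℝ: (i) for every ξ ∈ ℝ with ξ ≠ 0, |U†(ξ, β + iτ)| ≤ C ((1 + |τ|)/|ξ|)^j; (ii) if τ ≠ 0, then for every ξ ∈ ℝ, |U†(ξ, β + iτ)| ≤ C ((1 + |ξ|)/|τ|)^j. -/

import Mathlib

open MeasureTheory Set

set_option maxHeartbeats 1000000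

/-- `e(x) = exp(2πix)`. -/
noncomputable def e2pi (x : ℝ) : ℂ := Complex.exp (2 * Real.pi * Complex.I * x)

/-- The Mellin-type transform `U†(ξ, s) = ∫₀^∞ U(y) e(−ξy) y^{s−1} dy`. -/
noncomputable def Udag (U : ℝ → ℝ) (ξ : ℝ) (s : ℂ) : ℂ :=
  ∫ y in Ioi (0 : ℝ), (U y : ℂ) * e2pi (-(ξ * y)) * (y : ℂ) ^ (s - 1)

noncomputable def Jint (A B : ℝ) (U : ℝ → ℝ) (ξ : ℝ) (s : ℂ) : ℂ :=
  ∫ y in A..B, (U y : ℂ) * e2pi (-(ξ * y)) * (y : ℂ) ^ (s - 1)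

lemma e2pi_eq (ξ y : ℝ) :
    e2pi (-(ξ * y)) = Complex.exp ((-(2 * Real.pi * Complex.I * ξ)) * y) := by
  unfold e2pi; push_cast; ring_nf

lemma hasDerivAt_e2pi (ξ y : ℝ) :
    HasDerivAt (fun t : ℝ => e2pi (-(ξ * t)))
      ((-(2 * Real.pi * Complex.I * ξ)) * e2pi (-(ξ * y))) y := by
  have h : HasDerivAt (fun z : ℂ => Complex.exp ((-(2 * Real.pi * Complex.I * ξ)) * z))
      ((-(2 * Real.pi * Complex.I * ξ)) *
        Complex.exp ((-(2 * Real.pi * Complex.I * ξ)) * y)) (y : ℂ) := by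
    simpa [mul_comm] using (((hasDerivAt_id (y : ℂ)).const_mul
      (-(2 * Real.pi * Complex.I * ξ))).cexp)
  have h2 := h.comp_ofReal
  simp only [← e2pi_eq] at h2
  exact h2

lemma hasDerivAt_cpow_real {c : ℂ} {y : ℝ} (hy : 0 < y) :
    HasDerivAt (fun t : ℝ => (t : ℂ) ^ c) (c * (y : ℂ) ^ (c - 1)) y :=
  (Complex.hasStrictDerivAt_cpow_const
    (Complex.ofReal_mem_slitPlane.2 hy)).hasDerivAt.comp_ofReal

lemma contOn_cpow (c : ℂ) : ContinuousOn (fun y : ℝ => (y : ℂ) ^ c) (Ioi 0) :=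
  fun _ hy => ((hasDerivAt_cpow_real (c := c) hy).continuousAt).continuousWithinAt

lemma continuous_e2pi_lin (ξ : ℝ) : Continuous fun x : ℝ => e2pi (-(ξ * x)) :=
  continuous_iff_continuousAt.mpr fun x => (hasDerivAt_e2pi ξ x).continuousAt

section IBP

variable {a b A B : ℝ} (hA : 0 < A) (hAa : A < a) (hab : a < b) (hbB : b < B)
  {U : ℝ → ℝ} (hU : ContDiff ℝ (⊤ : ℕ∞) U) (hsupp : Function.support U ⊆ Icc a b)

include hA hAa hab hbB hU hsupp

lemma ibp1 (ξ : ℝ) (s : ℂ) :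
    (-(2 * Real.pi * Complex.I * ξ)) * Jint A B U ξ s
      = -(Jint A B (deriv U) ξ s + (s - 1) * Jint A B U ξ (s - 1)) := by
  have hAB : A < B := hAa.trans (hab.trans hbB)
  set c : ℂ := -(2 * Real.pi * Complex.I * ξ) with hc
  have hIoi : uIcc A B ⊆ Ioi 0 := by
    rw [uIcc_of_le hAB.le]; intro x hx; exact lt_of_lt_of_le hA hx.1
  have hUdiff : Differentiable ℝ U := hU.differentiable (by simp)
  have hderiv : ContDiff ℝ (⊤ : ℕ∞) (deriv U) := (contDiff_infty_iff_deriv.mp hU).2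
  have hcU : Continuous fun x : ℝ => ((U x : ℝ) : ℂ) :=
    Complex.continuous_ofReal.comp hU.continuous
  have hcU' : Continuous fun x : ℝ => ((deriv U x : ℝ) : ℂ) :=
    Complex.continuous_ofReal.comp hderiv.continuous
  have hcpow : ∀ d : ℂ, ContinuousOn (fun x : ℝ => (x : ℂ) ^ d) (uIcc A B) :=
    fun d => (contOn_cpow d).mono hIoi
  have hce := continuous_e2pi_lin ξ
  -- derivative hypotheses
  have hu : ∀ x ∈ uIcc A B, HasDerivAt (fun x => (U x : ℂ) * (x : ℂ) ^ (s - 1))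
      (((deriv U x : ℝ) : ℂ) * (x : ℂ) ^ (s - 1)
        + (U x : ℂ) * ((s - 1) * (x : ℂ) ^ (s - 1 - 1))) x := by
    intro x hx
    exact ((hUdiff x).hasDerivAt.ofReal_comp).mul (hasDerivAt_cpow_real (hIoi hx))
  have hv : ∀ x ∈ uIcc A B,
      HasDerivAt (fun x => e2pi (-(ξ * x))) (c * e2pi (-(ξ * x))) x :=
    fun x _ => hasDerivAt_e2pi ξ x
  have hf1 : IntervalIntegrable (fun x : ℝ => ((deriv U x : ℝ) : ℂ) * e2pi (-(ξ * x))
      * (x : ℂ) ^ (s - 1)) volume A B :=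
    (((hcU'.mul hce).continuousOn).mul (hcpow _)).intervalIntegrable
  have hf2 : IntervalIntegrable (fun x : ℝ => (U x : ℂ) * e2pi (-(ξ * x))
      * (x : ℂ) ^ (s - 1 - 1)) volume A B :=
    (((hcU.mul hce).continuousOn).mul (hcpow _)).intervalIntegrable
  have hu' : IntervalIntegrable (fun x : ℝ => ((deriv U x : ℝ) : ℂ) * (x : ℂ) ^ (s - 1)
      + (U x : ℂ) * ((s - 1) * (x : ℂ) ^ (s - 1 - 1))) volume A B :=
    ((hcU'.continuousOn.mul (hcpow _)).add
      (hcU.continuousOn.mul ((hcpow _).const_smul (s-1)))).intervalIntegrable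
  have hv' : IntervalIntegrable (fun x : ℝ => c * e2pi (-(ξ * x))) volume A B :=
    (continuous_const.mul hce).intervalIntegrable A B
  have key := intervalIntegral.integral_mul_deriv_eq_deriv_mul hu hv hu' hv'
  -- endpoints vanish
  have hend : ∀ x : ℝ, x ∉ Icc a b → U x = 0 := fun x hx => by
    by_contra h; exact hx (hsupp h)
  have hUA : U A = 0 := hend A (by simp only [mem_Icc, not_and_or]; left; linarith)
  have hUB : U B = 0 := hend B (by simp only [mem_Icc, not_and_or]; right; linarith)
  -- rewrite both sides
  have l1 : (∫ x in A..B, ((U x : ℂ) * (x : ℂ) ^ (s - 1)) * (c * e2pi (-(ξ * x))))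
      = c * Jint A B U ξ s := by
    rw [Jint, ← intervalIntegral.integral_const_mul]
    apply intervalIntegral.integral_congr
    intro x _; ring
  have r1 : (∫ x in A..B, (((deriv U x : ℝ) : ℂ) * (x : ℂ) ^ (s - 1)
        + (U x : ℂ) * ((s - 1) * (x : ℂ) ^ (s - 1 - 1))) * e2pi (-(ξ * x)))
      = Jint A B (deriv U) ξ s + (s - 1) * Jint A B U ξ (s - 1) := by
    have hf2' : IntervalIntegrable (fun x : ℝ => (s - 1) * ((U x : ℂ) * e2pi (-(ξ * x))
        * (x : ℂ) ^ (s - 1 - 1))) volume A B :=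
      (continuousOn_const.mul ((hcU.mul hce).continuousOn.mul (hcpow _))).intervalIntegrable
    rw [show (fun x : ℝ => (((deriv U x : ℝ) : ℂ) * (x : ℂ) ^ (s - 1)
        + (U x : ℂ) * ((s - 1) * (x : ℂ) ^ (s - 1 - 1))) * e2pi (-(ξ * x)))
      = fun x : ℝ => (((deriv U x : ℝ) : ℂ) * e2pi (-(ξ * x)) * (x : ℂ) ^ (s - 1))
        + (s - 1) * ((U x : ℂ) * e2pi (-(ξ * x)) * (x : ℂ) ^ (s - 1 - 1)) from
        funext fun x => by ring]
    rw [intervalIntegral.integral_add hf1 hf2',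
      intervalIntegral.integral_const_mul]
    simp only [Jint]
  rw [l1, hUA, hUB] at key
  simp only [Complex.ofReal_zero, zero_mul] at key
  rw [key, r1]
  ring

end IBP

section IBP2

variable {a b A B : ℝ} (hA : 0 < A) (hAa : A < a) (hab : a < b) (hbB : b < B)
  {U : ℝ → ℝ} (hU : ContDiff ℝ (⊤ : ℕ∞) U) (hsupp : Function.support U ⊆ Icc a b)

include hA hAa hab hbB hU hsupp

lemma ibp2 (ξ : ℝ) (s : ℂ) (hs : s ≠ 0) :
    s * Jint A B U ξ s = -(Jint A B (deriv U) ξ (s + 1)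
      + (-(2 * Real.pi * Complex.I * ξ)) * Jint A B U ξ (s + 1)) := by
  have hAB : A < B := hAa.trans (hab.trans hbB)
  set c : ℂ := -(2 * Real.pi * Complex.I * ξ) with hc
  have hIoi : uIcc A B ⊆ Ioi 0 := by
    rw [uIcc_of_le hAB.le]; intro x hx; exact lt_of_lt_of_le hA hx.1
  have hUdiff : Differentiable ℝ U := hU.differentiable (by simp)
  have hderiv : ContDiff ℝ (⊤ : ℕ∞) (deriv U) := (contDiff_infty_iff_deriv.mp hU).2
  have hcU : Continuous fun x : ℝ => ((U x : ℝ) : ℂ) :=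
    Complex.continuous_ofReal.comp hU.continuous
  have hcU' : Continuous fun x : ℝ => ((deriv U x : ℝ) : ℂ) :=
    Complex.continuous_ofReal.comp hderiv.continuous
  have hcpow : ∀ d : ℂ, ContinuousOn (fun x : ℝ => (x : ℂ) ^ d) (uIcc A B) :=
    fun d => (contOn_cpow d).mono hIoi
  have hce := continuous_e2pi_lin ξ
  have hu : ∀ x ∈ uIcc A B, HasDerivAt (fun x => (U x : ℂ) * e2pi (-(ξ * x)))
      (((deriv U x : ℝ) : ℂ) * e2pi (-(ξ * x)) + (U x : ℂ) * (c * e2pi (-(ξ * x)))) x :=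
    fun x _ => ((hUdiff x).hasDerivAt.ofReal_comp).mul (hasDerivAt_e2pi ξ x)
  have hv : ∀ x ∈ uIcc A B,
      HasDerivAt (fun t : ℝ => (t : ℂ) ^ s / s) ((x : ℂ) ^ (s - 1)) x := by
    intro x hx
    have h := (hasDerivAt_cpow_real (c := s) (hIoi hx)).div_const s
    rwa [mul_comm, mul_div_assoc, div_self hs, mul_one] at h
  have hu' : IntervalIntegrable (fun x : ℝ => ((deriv U x : ℝ) : ℂ) * e2pi (-(ξ * x))
      + (U x : ℂ) * (c * e2pi (-(ξ * x)))) volume A B :=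
    ((hcU'.mul hce).add (hcU.mul (continuous_const.mul hce))).intervalIntegrable A B
  have hv' : IntervalIntegrable (fun x : ℝ => (x : ℂ) ^ (s - 1)) volume A B :=
    (hcpow (s - 1)).intervalIntegrable
  have key := intervalIntegral.integral_mul_deriv_eq_deriv_mul hu hv hu' hv'
  have hend : ∀ x : ℝ, x ∉ Icc a b → U x = 0 := fun x hx => by
    by_contra h; exact hx (hsupp h)
  have hUA : U A = 0 := hend A (by simp only [mem_Icc, not_and_or]; left; linarith)
  have hUB : U B = 0 := hend B (by simp only [mem_Icc, not_and_or]; right; linarith)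
  have step : Jint A B U ξ s = -∫ x in A..B,
      (((deriv U x : ℝ) : ℂ) * e2pi (-(ξ * x)) + (U x : ℂ) * (c * e2pi (-(ξ * x))))
        * ((x : ℂ) ^ s / s) := by
    rw [Jint, key, hUA, hUB]
    simp
  have hg1 : IntervalIntegrable (fun x : ℝ => ((deriv U x : ℝ) : ℂ) * e2pi (-(ξ * x))
      * (x : ℂ) ^ (s + 1 - 1)) volume A B :=
    (((hcU'.mul hce).continuousOn).mul (hcpow _)).intervalIntegrable
  have hg2 : IntervalIntegrable (fun x : ℝ => c * ((U x : ℂ) * e2pi (-(ξ * x))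
      * (x : ℂ) ^ (s + 1 - 1))) volume A B :=
    (continuousOn_const.mul (((hcU.mul hce).continuousOn).mul (hcpow _))).intervalIntegrable
  calc s * Jint A B U ξ s
      = -∫ x in A..B, s * ((((deriv U x : ℝ) : ℂ) * e2pi (-(ξ * x))
          + (U x : ℂ) * (c * e2pi (-(ξ * x)))) * ((x : ℂ) ^ s / s)) := by
        rw [step, mul_neg, ← intervalIntegral.integral_const_mul]
    _ = -∫ x in A..B, (((deriv U x : ℝ) : ℂ) * e2pi (-(ξ * x)) * (x : ℂ) ^ (s + 1 - 1)
          + c * ((U x : ℂ) * e2pi (-(ξ * x)) * (x : ℂ) ^ (s + 1 - 1))) := by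
        congr 1
        apply intervalIntegral.integral_congr
        intro x _
        have h1 : (x : ℂ) ^ (s + 1 - 1) = (x : ℂ) ^ s := by norm_num
        simp only [h1]
        field_simp
    _ = -(Jint A B (deriv U) ξ (s + 1) + c * Jint A B U ξ (s + 1)) := by
        rw [intervalIntegral.integral_add hg1 hg2, intervalIntegral.integral_const_mul]
        simp only [Jint]

end IBP2

lemma norm_e2pi (x : ℝ) : ‖e2pi x‖ = 1 := by
  unfold e2pi
  rw [Complex.norm_exp]
  simp

lemma norm_c2pi (ξ : ℝ) : ‖(-(2 * Real.pi * Complex.I * ξ) : ℂ)‖ = 2 * Real.pi * |ξ| := by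
  rw [norm_neg, show ((2 * Real.pi * Complex.I * ξ) : ℂ)
    = ((2 * Real.pi : ℝ) : ℂ) * Complex.I * ((ξ : ℝ) : ℂ) by push_cast; ring]
  rw [norm_mul, norm_mul, Complex.norm_I, Complex.norm_real, Complex.norm_real]
  rw [Real.norm_eq_abs, Real.norm_eq_abs, abs_of_pos (by positivity : (0:ℝ) < 2 * Real.pi)]
  ring

lemma Udag_eq_Jint {a b A B : ℝ} (hA : 0 < A) (hAa : A < a) (hbB : b < B)
    {U : ℝ → ℝ} (hsupp : Function.support U ⊆ Icc a b) (ξ : ℝ) (s : ℂ) :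
    Udag U ξ s = Jint A B U ξ s := by
  unfold Udag Jint
  have hsub : Function.support
      (fun y : ℝ => (U y : ℂ) * e2pi (-(ξ * y)) * (y : ℂ) ^ (s - 1)) ⊆ Ioc A B := by
    intro x hx
    have hUx : U x ≠ 0 := by
      intro h
      apply hx
      simp [Function.mem_support, h]
    have hx' := hsupp hUx
    exact ⟨lt_of_lt_of_le hAa hx'.1, hx'.2.trans hbB.le⟩
  rw [intervalIntegral.integral_eq_integral_of_support_subset hsub]
  rw [MeasureTheory.setIntegral_eq_integral_of_forall_compl_eq_zero]
  intro x hx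
  have hUx : U x = 0 := by
    by_contra h
    have := hsupp h
    exact hx (lt_of_lt_of_le (lt_trans hA hAa) this.1)
  simp [hUx]

lemma Jint_base {a b A B : ℝ} (hA : 0 < A) (hAB : A < B) (β : ℝ) :
    ∃ C : ℝ, 0 < C ∧ ∀ U : ℝ → ℝ, (∀ y, |U y| ≤ 1) →
      ∀ ξ : ℝ, ∀ s : ℂ, s.re = β → ‖Jint A B U ξ s‖ ≤ C := by
  set K : ℝ := max (A ^ (β - 1)) (B ^ (β - 1)) with hK
  have hKpos : 0 < K := lt_max_of_lt_left (Real.rpow_pos_of_pos hA _)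
  refine ⟨K * |B - A| + 1, by positivity, fun U hU ξ s hs => ?_⟩
  have h1 : ‖Jint A B U ξ s‖ ≤ K * |B - A| := by
    apply intervalIntegral.norm_integral_le_of_norm_le_const
    intro x hx
    rw [uIoc_of_le hAB.le] at hx
    have hx0 : 0 < x := lt_trans hA hx.1
    have h2 : ‖(x : ℂ) ^ (s - 1)‖ = x ^ (β - 1) := by
      rw [Complex.norm_cpow_eq_rpow_re_of_pos hx0]
      congr 1
      simp [hs]
    have h3 : x ^ (β - 1) ≤ K := by
      rcases le_or_gt 0 (β - 1) with h | h
      · exact le_max_of_le_right (Real.rpow_le_rpow hx0.le hx.2 h)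
      · exact le_max_of_le_left (Real.rpow_le_rpow_of_nonpos hA hx.1.le h.le)
    calc ‖(U x : ℂ) * e2pi (-(ξ * x)) * (x : ℂ) ^ (s - 1)‖
        = ‖(U x : ℂ)‖ * ‖e2pi (-(ξ * x))‖ * ‖(x : ℂ) ^ (s - 1)‖ := by
          rw [norm_mul, norm_mul]
      _ ≤ 1 * 1 * K := by
          gcongr
          · rw [Complex.norm_real, Real.norm_eq_abs]; exact hU x
          · rw [norm_e2pi]
          · rw [h2]; exact h3
      _ = K := by ring
  linarith

lemma Jint_key {a b A B : ℝ} (hA : 0 < A) (hAa : A < a) (hab : a < b) (hbB : b < B) :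
    ∀ j : ℕ, ∀ β : ℝ, ∃ C : ℝ, 0 < C ∧
      ∀ U : ℝ → ℝ, ContDiff ℝ (⊤ : ℕ∞) U → Function.support U ⊆ Icc a b →
        (∀ i : ℕ, i ≤ j → ∀ y : ℝ, |iteratedDeriv i U y| ≤ 1) →
        ∀ ξ τ : ℝ,
          (ξ ≠ 0 → ‖Jint A B U ξ ((β : ℂ) + τ * Complex.I)‖ ≤ C * ((1 + |τ|) / |ξ|) ^ j) ∧
          (τ ≠ 0 → ‖Jint A B U ξ ((β : ℂ) + τ * Complex.I)‖ ≤ C * ((1 + |ξ|) / |τ|) ^ j) := by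
  have hAB : A < B := hAa.trans (hab.trans hbB)
  intro j
  induction j with
  | zero =>
    intro β
    obtain ⟨C, hC, hbound⟩ := Jint_base (a := a) (b := b) hA hAB β
    refine ⟨C, hC, fun U _ _ hbd ξ τ => ?_⟩
    have hre : ((β : ℂ) + τ * Complex.I).re = β := by simp
    have hb := hbound U (fun y => by simpa [iteratedDeriv_zero] using hbd 0 le_rfl y) ξ _ hre
    exact ⟨fun _ => by simpa using hb, fun _ => by simpa using hb⟩
  | succ j IH =>
    intro β
    obtain ⟨Cβ, hCβ, hβ⟩ := IH β
    obtain ⟨Cm, hCm, hm⟩ := IH (β - 1)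
    obtain ⟨Cp, hCp, hp⟩ := IH (β + 1)
    refine ⟨Cβ + (1 + |β - 1|) * Cm + (1 + 2 * Real.pi) * Cp, by positivity,
      fun U hU hsupp hbd ξ τ => ?_⟩
    set Ctot : ℝ := Cβ + (1 + |β - 1|) * Cm + (1 + 2 * Real.pi) * Cp with hCtot
    have hU' : ContDiff ℝ (⊤ : ℕ∞) (deriv U) := (contDiff_infty_iff_deriv.mp hU).2
    have hsupp' : Function.support (deriv U) ⊆ Icc a b :=
      support_deriv_subset.trans (closure_minimal hsupp isClosed_Icc)
    have hbd' : ∀ i : ℕ, i ≤ j → ∀ y : ℝ, |iteratedDeriv i (deriv U) y| ≤ 1 := by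
      intro i hi y
      rw [← iteratedDeriv_succ']
      exact hbd (i + 1) (by omega) y
    have hbdU : ∀ i : ℕ, i ≤ j → ∀ y : ℝ, |iteratedDeriv i U y| ≤ 1 :=
      fun i hi y => hbd i (by omega) y
    set s : ℂ := (β : ℂ) + τ * Complex.I with hsdef
    have hpi : (3 : ℝ) < Real.pi := Real.pi_gt_three
    constructor
    · -- part (i) : ξ ≠ 0
      intro hξ
      have hξ0 : (0 : ℝ) < |ξ| := abs_pos.mpr hξ
      set X : ℝ := (1 + |τ|) / |ξ| with hXdef
      have hXj : (0 : ℝ) ≤ X ^ j := by positivity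
      have hXξ : X * |ξ| = 1 + |τ| := div_mul_cancel₀ _ (ne_of_gt hξ0)
      have ht : (1 : ℝ) ≤ 1 + |τ| := le_add_of_nonneg_right (abs_nonneg τ)
      have hid := ibp1 hA hAa hab hbB hU hsupp ξ s
      have hnorm : (2 * Real.pi * |ξ|) * ‖Jint A B U ξ s‖
          = ‖Jint A B (deriv U) ξ s + (s - 1) * Jint A B U ξ (s - 1)‖ := by
        rw [← norm_c2pi ξ, ← norm_mul, hid, norm_neg]
      have hs1 : s - 1 = ((β - 1 : ℝ) : ℂ) + τ * Complex.I := by push_cast; ring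
      have h1 : ‖Jint A B (deriv U) ξ s‖ ≤ Cβ * X ^ j :=
        (hβ (deriv U) hU' hsupp' hbd' ξ τ).1 hξ
      have h2 : ‖Jint A B U ξ (s - 1)‖ ≤ Cm * X ^ j := by
        rw [hs1]; exact (hm U hU hsupp hbdU ξ τ).1 hξ
      have h3 : ‖s - 1‖ ≤ (1 + |β - 1|) * (1 + |τ|) := by
        have e1 : ‖s - 1‖ ≤ |β - 1| + |τ| := by
          rw [hs1]
          refine (norm_add_le _ _).trans ?_
          rw [norm_mul, Complex.norm_real, Complex.norm_I, Complex.norm_real]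
          simp [Real.norm_eq_abs]
        nlinarith [abs_nonneg (β - 1), abs_nonneg τ, abs_mul_abs_self τ,
          mul_nonneg (abs_nonneg (β - 1)) (abs_nonneg τ)]
      have e2 : (2 * Real.pi * |ξ|) * ‖Jint A B U ξ s‖
          ≤ Cβ * X ^ j + ((1 + |β - 1|) * (1 + |τ|)) * (Cm * X ^ j) := by
        rw [hnorm]
        refine (norm_add_le _ _).trans ?_
        gcongr
        rw [norm_mul]
        exact mul_le_mul h3 h2 (norm_nonneg _) (by positivity)
      rw [pow_succ]
      refine le_of_mul_le_mul_left ?_ (show (0 : ℝ) < 2 * Real.pi * |ξ| by positivity)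
      rw [show (2 * Real.pi * |ξ|) * (Ctot * (X ^ j * X))
          = 2 * Real.pi * (Ctot * (X ^ j * (X * |ξ|))) from by ring, hXξ]
      refine e2.trans ?_
      rw [hCtot]
      have hPt : (0 : ℝ) ≤ X ^ j * (1 + |τ|) := by positivity
      have step1 : Cβ * X ^ j + ((1 + |β - 1|) * (1 + |τ|)) * (Cm * X ^ j)
          ≤ (Cβ + (1 + |β - 1|) * Cm) * (X ^ j * (1 + |τ|)) := by
        nlinarith [mul_nonneg (mul_nonneg hCβ.le hXj) (abs_nonneg τ)]
      refine step1.trans ?_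
      have k1 : (0 : ℝ) ≤ (2 * Real.pi - 1) * ((Cβ + (1 + |β - 1|) * Cm) * (X ^ j * (1 + |τ|))) := by
        have : (0 : ℝ) ≤ Cβ + (1 + |β - 1|) * Cm := by positivity
        nlinarith [mul_nonneg this hPt]
      have k2 : (0 : ℝ) ≤ 2 * Real.pi * ((1 + 2 * Real.pi) * Cp * (X ^ j * (1 + |τ|))) := by
        positivity
      nlinarith [k1, k2]
    · -- part (ii) : τ ≠ 0
      intro hτ
      have hτ0 : (0 : ℝ) < |τ| := abs_pos.mpr hτ
      set Y : ℝ := (1 + |ξ|) / |τ| with hYdef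
      have hYj : (0 : ℝ) ≤ Y ^ j := by positivity
      have hYτ : Y * |τ| = 1 + |ξ| := div_mul_cancel₀ _ (ne_of_gt hτ0)
      have hs0 : s ≠ 0 := by
        intro h
        apply hτ
        have := congrArg Complex.im h
        simpa [hsdef] using this
      have hid := ibp2 hA hAa hab hbB hU hsupp ξ s hs0
      have hsnorm : |τ| ≤ ‖s‖ := by
        have : |s.im| ≤ ‖s‖ := Complex.abs_im_le_norm s
        simpa [hsdef] using this
      have hs1 : s + 1 = ((β + 1 : ℝ) : ℂ) + τ * Complex.I := by push_cast; ring
      have h1 : ‖Jint A B (deriv U) ξ (s + 1)‖ ≤ Cp * Y ^ j := by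
        rw [hs1]; exact (hp (deriv U) hU' hsupp' hbd' ξ τ).2 hτ
      have h2 : ‖Jint A B U ξ (s + 1)‖ ≤ Cp * Y ^ j := by
        rw [hs1]; exact (hp U hU hsupp hbdU ξ τ).2 hτ
      have e2 : |τ| * ‖Jint A B U ξ s‖
          ≤ Cp * Y ^ j + (2 * Real.pi * |ξ|) * (Cp * Y ^ j) := by
        have e0 : ‖s‖ * ‖Jint A B U ξ s‖
            = ‖Jint A B (deriv U) ξ (s + 1)
              + (-(2 * Real.pi * Complex.I * ξ)) * Jint A B U ξ (s + 1)‖ := by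
          rw [← norm_mul, hid, norm_neg]
        have e1 : ‖s‖ * ‖Jint A B U ξ s‖
            ≤ Cp * Y ^ j + (2 * Real.pi * |ξ|) * (Cp * Y ^ j) := by
          rw [e0]
          refine (norm_add_le _ _).trans ?_
          gcongr
          rw [norm_mul, norm_c2pi]
          exact mul_le_mul_of_nonneg_left h2 (by positivity)
        exact le_trans (mul_le_mul_of_nonneg_right hsnorm (norm_nonneg _)) e1
      rw [pow_succ]
      refine le_of_mul_le_mul_left ?_ hτ0
      rw [show |τ| * (Ctot * (Y ^ j * Y)) = Ctot * (Y ^ j * (Y * |τ|)) from by ring, hYτ]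
      calc |τ| * ‖Jint A B U ξ s‖
          ≤ Cp * Y ^ j + (2 * Real.pi * |ξ|) * (Cp * Y ^ j) := e2
        _ ≤ Ctot * (Y ^ j * (1 + |ξ|)) := by
            rw [hCtot]
            have hQx : (0 : ℝ) ≤ Y ^ j * (1 + |ξ|) := by positivity
            have k1 : (0 : ℝ) ≤ (Cβ + (1 + |β - 1|) * Cm) * (Y ^ j * (1 + |ξ|)) := by
              have : (0 : ℝ) ≤ Cβ + (1 + |β - 1|) * Cm := by positivity
              exact mul_nonneg this hQx
            have k2 : (0 : ℝ) ≤ Cp * Y ^ j * (|ξ| + 2 * Real.pi) := by positivity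
            nlinarith [k1, k2]

/-- The bound (A.6) of the paper for the transform `U†` (Lemma 5 of Munshi). -/
theorem Udag_bound (a b β : ℝ) (ha : 0 < a) (hab : a < b) (j : ℕ) :
    ∃ C : ℝ, 0 < C ∧
      ∀ U : ℝ → ℝ, ContDiff ℝ (⊤ : ℕ∞) U → Function.support U ⊆ Icc a b →
        (∀ i : ℕ, i ≤ j → ∀ y : ℝ, |iteratedDeriv i U y| ≤ 1) →
        ∀ τ : ℝ,
          (∀ ξ : ℝ, ξ ≠ 0 →
            ‖Udag U ξ ((β : ℂ) + τ * Complex.I)‖ ≤ C * ((1 + |τ|) / |ξ|) ^ j) ∧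
          (τ ≠ 0 → ∀ ξ : ℝ,
            ‖Udag U ξ ((β : ℂ) + τ * Complex.I)‖ ≤ C * ((1 + |ξ|) / |τ|) ^ j) := by
  have hA : (0 : ℝ) < a / 2 := by linarith
  have hAa : a / 2 < a := by linarith
  have hbB : b < b + 1 := by linarith
  obtain ⟨C, hC, hkey⟩ := Jint_key (A := a / 2) (B := b + 1) hA hAa hab hbB j β
  refine ⟨C, hC, fun U hU hsupp hbd τ => ?_⟩
  have hU' : ContDiff ℝ (⊤ : ℕ∞) U := hU.of_le (by simp)
  constructor
  · intro ξ hξ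
    rw [Udag_eq_Jint hA hAa hbB hsupp ξ _]
    exact (hkey U hU' hsupp hbd ξ τ).1 hξ
  · intro hτ ξ
    rw [Udag_eq_Jint hA hAa hbB hsupp ξ _]
    exact (hkey U hU' hsupp hbd ξ τ).2 hτ
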